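/- Let p be a prime with p ≡ 1 (mod 4) and let e be an odd positive integer. Assume that for every integer h with 1 ≤ h < e, p^h divides u(n) for all n ≥ ⌈hp/2⌉. Then u((ep−1)/2) ≡ Π1((ep−1)/2) − Σ_{i=1}^{(e−1)/2} C(ep, 2ip)·Π3(ip)·u((ep−1)/2 − ip) (mod p^e). -/

import Mathlib

/-- `Π₁(N) = ∏_{j=1}^{N} (4j−1)²`. -/
def Pi1 (N : ℕ) : ℤ := ∏ j ∈ Finset.Icc 1 N, (4 * (j : ℤ) - 1) ^ 2

/-- `Π₃(N) = ∏_{j=1}^{N} (4j−3)²`. -/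
def Pi3 (N : ℕ) : ℤ := ∏ j ∈ Finset.Icc 1 N, (4 * (j : ℤ) - 3) ^ 2

/-!
Reflecting `m ↦ N - m` in the recurrence at `N = (ep - 1)/2` (so `2N + 1 = ep`) and using
`C(ep, 2m + 1) = C(ep, 2(N - m))` gives `u N = Π₁ N - ∑_{k=1}^{N} C(ep, 2k) Π₃(k) u(N - k)`.
The terms with `p ∣ k` are exactly those kept in the claim. For `p ∤ k` write `2k = sp + r` with
`0 < r < p`: then `p ∣ C(ep, 2k)`; `p^s ∣ Π₃(k)`, because `p ≡ 1 (mod 4)` puts the multiples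
`(4t + 1)p` of `p` among the factors `4j - 3`; and `p^(e-1-s) ∣ u(N - k)` by hypothesis, since
`2(N - k) + 1 = ep - 2k > (e - 1 - s)p`. The exponents add up to `e`.
-/

open Finset

lemma Nat.Prime.dvd_choose_of_dvd_of_not_dvd {p n k : ℕ} (hp : p.Prime) (hn : p ∣ n)
    (hk : ¬ p ∣ k) : p ∣ n.choose k := by
  obtain _ | k := k
  · exact absurd (dvd_zero p) hk
  obtain _ | n := n
  · simp
  have h : p ∣ (n + 1).choose (k + 1) * (k + 1) :=
    Nat.add_one_mul_choose_eq n k ▸ dvd_mul_of_dvd_left hn _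
  exact (hp.dvd_mul.mp h).resolve_right hk

lemma Pi3_succ (n : ℕ) : Pi3 (n + 1) = Pi3 n * (4 * ((n + 1 : ℕ) : ℤ) - 3) ^ 2 := by
  rw [Pi3, Pi3, prod_Icc_succ_top (by omega)]

lemma Pi3_dvd_Pi3 {m n : ℕ} (h : m ≤ n) : Pi3 m ∣ Pi3 n :=
  prod_dvd_prod_of_subset _ _ _ (Icc_subset_Icc_right h)

/-- For `p = 4c + 1` the factors `4j - 3` of `Pi3 ℓ` with `j = tp + c + 1`, `t < T`, are the
multiples `(4t + 1)p` of `p`. -/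
lemma pow_two_mul_dvd_Pi3 {c T ℓ : ℕ} (h : T * (4 * c + 1) ≤ ℓ + 3 * c) :
    ((4 * c + 1 : ℕ) : ℤ) ^ (2 * T) ∣ Pi3 ℓ := by
  induction T generalizing ℓ with
  | zero => simp
  | succ T ih =>
    set j := T * (4 * c + 1) + c
    have hfactor : 4 * ((j + 1 : ℕ) : ℤ) - 3 = (4 * T + 1) * ((4 * c + 1 : ℕ) : ℤ) := by
      push_cast [j]; ring
    calc ((4 * c + 1 : ℕ) : ℤ) ^ (2 * (T + 1))
        = ((4 * c + 1 : ℕ) : ℤ) ^ (2 * T) * ((4 * c + 1 : ℕ) : ℤ) ^ 2 := by ring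
      _ ∣ Pi3 j * (4 * ((j + 1 : ℕ) : ℤ) - 3) ^ 2 := by
        refine mul_dvd_mul (ih (by omega)) (pow_dvd_pow_of_dvd ?_ 2)
        exact hfactor ▸ dvd_mul_left _ _
      _ = Pi3 (j + 1) := (Pi3_succ j).symm
      _ ∣ Pi3 ℓ := Pi3_dvd_Pi3 (by rw [add_mul] at h; omega)

lemma prime_pow_dvd_Pi3 {p s k : ℕ} (hp1 : p % 4 = 1) (hs : s * p < 2 * k) :
    (p : ℤ) ^ s ∣ Pi3 k := by
  obtain ⟨c, rfl⟩ : ∃ c, p = 4 * c + 1 := ⟨p / 4, by omega⟩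
  have hT : (s + 1) / 2 * (4 * c + 1) ≤ k + 3 * c := by
    have : 2 * ((s + 1) / 2) ≤ s + 1 := Nat.mul_div_le _ _
    nlinarith
  exact (pow_dvd_pow _ (by omega)).trans (pow_two_mul_dvd_Pi3 hT)

lemma sum_choose_odd_reflect {R : Type*} [CommSemiring R] (n : ℕ) (a b : ℕ → R) :
    ∑ m ∈ range n, ((2 * n + 1).choose (2 * m + 1) : R) * a (n - m) * b m =
      ∑ k ∈ Icc 1 n, ((2 * n + 1).choose (2 * k) : R) * a k * b (n - k) := by
  refine sum_nbij' (n - ·) (n - ·) ?_ ?_ ?_ ?_ ?_ <;> intro m hm <;>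
    simp only [mem_range, mem_Icc] at hm ⊢
  · omega
  · omega
  · omega
  · omega
  · rw [Nat.sub_sub_self hm.le, show 2 * (n - m) = 2 * n + 1 - (2 * m + 1) by omega,
      Nat.choose_symm (by omega)]

lemma sum_Icc_eq_sum_multiples_add_sum_not_dvd {M : Type*} [AddCommMonoid M] {p : ℕ}
    (hp : 0 < p) (n : ℕ) (f : ℕ → M) :
    ∑ k ∈ Icc 1 n, f k = ∑ i ∈ Icc 1 (n / p), f (i * p) + ∑ k ∈ Icc 1 n with ¬ p ∣ k, f k := by
  rw [← sum_filter_add_sum_filter_not _ (p ∣ ·)]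
  congr 1
  refine sum_nbij' (· / p) (· * p) ?_ ?_ ?_ ?_ ?_ <;> intro k hk <;>
    simp only [mem_filter, mem_Icc] at hk ⊢
  · obtain ⟨⟨hk1, hkn⟩, i, rfl⟩ := hk
    rw [Nat.mul_div_cancel_left i hp]
    exact ⟨Nat.pos_of_ne_zero (by rintro rfl; simp at hk1),
      (Nat.le_div_iff_mul_le hp).mpr (by rwa [mul_comm])⟩
  · exact ⟨⟨Nat.mul_pos hk.1 hp, (Nat.le_div_iff_mul_le hp).mp hk.2⟩, dvd_mul_left p k⟩
  · exact Nat.div_mul_cancel hk.2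
  · exact Nat.mul_div_cancel k hp
  · rw [Nat.div_mul_cancel hk.2]

lemma prime_pow_dvd_term_of_not_dvd {p e N k : ℕ} {u : ℕ → ℤ} (hp : p.Prime) (hp1 : p % 4 = 1)
    (hdiv : ∀ h : ℕ, 1 ≤ h → h < e → ∀ n : ℕ, (h * p + 1) / 2 ≤ n → (p : ℤ) ^ h ∣ u n)
    (hN : 2 * N + 1 = e * p) (hkN : k ≤ N) (hpk : ¬ p ∣ k) :
    (p : ℤ) ^ e ∣ ((e * p).choose (2 * k) : ℤ) * Pi3 k * u (N - k) := by
  have hp2 : ¬ p ∣ 2 := fun h => by have := Nat.le_of_dvd two_pos h; have := hp.two_le; omega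
  have hp2k : ¬ p ∣ 2 * k := fun h => (hp.dvd_mul.mp h).elim hp2 hpk
  obtain ⟨s, hs, hs'⟩ : ∃ s, s * p < 2 * k ∧ 2 * k < s * p + p :=
    ⟨2 * k / p, lt_of_le_of_ne (Nat.div_mul_le_self _ _) fun h => hp2k ⟨_, by rw [← h, mul_comm]⟩,
      Nat.lt_div_mul_add hp.pos⟩
  have hse : s + 1 ≤ e := by
    by_contra! h
    have : e * p ≤ s * p := Nat.mul_le_mul_right p (by omega)
    omega
  have hchoose : p ∣ (e * p).choose (2 * k) :=
    hp.dvd_choose_of_dvd_of_not_dvd (dvd_mul_left p e) hp2k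
  have hu : (p : ℤ) ^ (e - 1 - s) ∣ u (N - k) := by
    rcases Nat.eq_zero_or_pos (e - 1 - s) with h0 | hpos
    · rw [h0]; exact one_dvd _
    refine hdiv _ hpos (by omega) _ ?_
    have : (e - 1 - s) * p + (s + 1) * p = e * p := by rw [← add_mul]; congr 1; omega
    rw [add_mul, one_mul] at this
    omega
  calc (p : ℤ) ^ e = p ^ 1 * p ^ s * p ^ (e - 1 - s) := by
        rw [← pow_add, ← pow_add]; congr 1; omega
    _ ∣ _ := mul_dvd_mul (mul_dvd_mul (by simpa using Int.natCast_dvd_natCast.mpr hchoose)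
        (prime_pow_dvd_Pi3 hp1 hs)) hu

theorem romik_u_reduced_recurrence_general
    (p : ℕ) (hp : p.Prime) (hp1 : p % 4 = 1)
    (e : ℕ) (heodd : Odd e)
    (u : ℕ → ℤ)
    (hu : ∀ n : ℕ, 1 ≤ n →
      u n = Pi1 n - ∑ m ∈ Finset.range n,
        ((2 * n + 1).choose (2 * m + 1) : ℤ) * Pi3 (n - m) * u m)
    (hdiv : ∀ h : ℕ, 1 ≤ h → h < e → ∀ n : ℕ, (h * p + 1) / 2 ≤ n → (p : ℤ) ^ h ∣ u n) :
    (p : ℤ) ^ e ∣ u ((e * p - 1) / 2) -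
      (Pi1 ((e * p - 1) / 2) - ∑ i ∈ Finset.Icc 1 ((e - 1) / 2),
        ((e * p).choose (2 * i * p) : ℤ) * Pi3 (i * p) * u ((e * p - 1) / 2 - i * p)) := by
  obtain ⟨a, rfl⟩ := heodd
  have hp2 := hp.two_le
  have hep : (2 * a + 1) * p = 2 * (a * p) + p := by ring
  set N := ((2 * a + 1) * p - 1) / 2
  have hN : 2 * N + 1 = (2 * a + 1) * p := by omega
  have hNp : N / p = (2 * a + 1 - 1) / 2 :=
    (Nat.div_eq_of_lt_le (k := a) (by omega) (by rw [add_mul]; omega)).trans (by omega)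
  have hterm : ∀ k ∈ {k ∈ Icc 1 N | ¬ p ∣ k},
      (p : ℤ) ^ (2 * a + 1) ∣ (((2 * a + 1) * p).choose (2 * k) : ℤ) * Pi3 k * u (N - k) := by
    intro k hk
    rw [mem_filter, mem_Icc] at hk
    exact prime_pow_dvd_term_of_not_dvd hp hp1 hdiv hN hk.1.2 hk.2
  rw [hu N (by omega), sum_choose_odd_reflect, hN, sum_Icc_eq_sum_multiples_add_sum_not_dvd hp.pos,
    hNp]
  simp only [mul_assoc 2]
  rw [sub_sub_sub_cancel_left, sub_add_cancel_left, dvd_neg]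
  exact dvd_sum hterm

theorem romik_u_reduced_recurrence
    (p : ℕ) (hp : p.Prime) (hp1 : p % 4 = 1)
    (e : ℕ) (he : 1 ≤ e) (heodd : Odd e)
    (u : ℕ → ℤ)
    (hu0 : u 0 = 1)
    (hu : ∀ n : ℕ, 1 ≤ n →
      u n = Pi1 n - ∑ m ∈ Finset.range n,
        ((2 * n + 1).choose (2 * m + 1) : ℤ) * Pi3 (n - m) * u m)
    (hdiv : ∀ h : ℕ, 1 ≤ h → h < e → ∀ n : ℕ, (h * p + 1) / 2 ≤ n → (p : ℤ) ^ h ∣ u n) :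
    (p : ℤ) ^ e ∣ u ((e * p - 1) / 2) -
      (Pi1 ((e * p - 1) / 2) - ∑ i ∈ Finset.Icc 1 ((e - 1) / 2),
        ((e * p).choose (2 * i * p) : ℤ) * Pi3 (i * p) * u ((e * p - 1) / 2 - i * p)) :=
  romik_u_reduced_recurrence_general p hp hp1 e heodd u hu hdiv
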